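/- arXiv:2303.10319 — 10 statements merged into one kernel-verified Lean document; each statement's English description precedes it below -/
import Mathlib

section
/- Let a, b, c, d, e, f be pairwise distinct complex numbers and set A = P(a), B = P(b), C = P(c), D = P(d), E = P(e), F = P(f) on the conic. Then the three points AE ∩ BF = (A ×₃ E) ×₃ (B ×₃ F), BD ∩ CE = (B ×₃ D) ×₃ (C ×₃ E), and AD ∩ CF = (A ×₃ D) ×₃ (C ×₃ F) are collinear; that is, the determinant of the 3×3 matrix whose rows are these three vectors is zero. (Pascal's theorem for the array [A B C; F E D].) -/
open Matrix

/-- The parametrization `P(t) = (1, t, t²)` of the conic `z₀z₂ = z₁²`. -/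
noncomputable def P (t : ℂ) : Fin 3 → ℂ := ![1, t, t ^ 2]

/-- **Pascal's theorem** for the array `[A B C; F E D]`: if `A, …, F` are six
pairwise distinct points on the conic, the three points `AE ∩ BF`, `BD ∩ CE`,
`AD ∩ CF` are collinear. -/
theorem pascal_collinear (a b c d e f : ℂ)
    (hdist : List.Pairwise (· ≠ ·) [a, b, c, d, e, f]) :
    Matrix.det
      ![(P a ⨯₃ P e) ⨯₃ (P b ⨯₃ P f),
        (P b ⨯₃ P d) ⨯₃ (P c ⨯₃ P e),
        (P a ⨯₃ P d) ⨯₃ (P c ⨯₃ P f)] = 0 := by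
  erw [Matrix.det_fin_three]
  simp only [P, crossProduct, det_fin_three, Matrix.cons_val_zero, Matrix.cons_val_one,
    Matrix.head_cons, Matrix.cons_val_two, Matrix.tail_cons, LinearMap.mk₂_apply]
  ring
end

section
/- For all complex numbers a, b, c, d, e, f, set A = P(a), …, F = P(f) and define u₀ = abde − abdf − acde + acef + bcdf − bcef, u₁ = −abe + abf + acd − acf + adf − aef − bcd + bce − bde + bef + cde − cdf, u₂ = −ad + ae + bd − bf − ce + cf. Then the vector u = (u₀, u₁, u₂) has zero dot product with each of the three points AE ∩ BF = (A ×₃ E) ×₃ (B ×₃ F), BD ∩ CE = (B ×₃ D) ×₃ (C ×₃ E), and AD ∩ CF = (A ×₃ D) ×₃ (C ×₃ F). In other words, ⟨u₀, u₁, u₂⟩ is the coordinate vector of the pascal of the array [A B C; F E D]. -/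
open Matrix
set_option maxHeartbeats 2000000

/-- The explicit coordinate vector `⟨u₀, u₁, u₂⟩` of the pascal of the array
`[A B C; F E D]`: it annihilates each of the three Pascal points
`AE ∩ BF`, `BD ∩ CE`, `AD ∩ CF`. -/

theorem pascal_coordinates (a b c d e f : ℂ) :
    letI u : Fin 3 → ℂ :=
      ![a*b*d*e - a*b*d*f - a*c*d*e + a*c*e*f + b*c*d*f - b*c*e*f,
        -(a*b*e) + a*b*f + a*c*d - a*c*f + a*d*f - a*e*f - b*c*d + b*c*e
          - b*d*e + b*e*f + c*d*e - c*d*f,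
        -(a*d) + a*e + b*d - b*f - c*e + c*f]
    u ⬝ᵥ ((P a ⨯₃ P e) ⨯₃ (P b ⨯₃ P f)) = 0 ∧
    u ⬝ᵥ ((P b ⨯₃ P d) ⨯₃ (P c ⨯₃ P e)) = 0 ∧
    u ⬝ᵥ ((P a ⨯₃ P d) ⨯₃ (P c ⨯₃ P f)) = 0 := by
  refine ⟨?_, ?_, ?_⟩ <;>
  · simp only [P, cross_apply, dotProduct, Fin.sum_univ_three, cons_val_zero,
      cons_val_one, head_cons, cons_val_two, tail_cons]
    ring
end

section
/- Let a, b, c, d, e, f be pairwise distinct complex numbers and A = P(a), …, F = P(f). Then the vectors R₁ = (A ×₃ E) ×₃ (B ×₃ F) and R₃ = (A ×₃ D) ×₃ (C ×₃ F) (the Pascal points AE ∩ BF and AD ∩ CF of the array [A B C; F E D]) are linearly independent over ℂ. In particular both are nonzero, so the pascal of the array is a well-defined line (the line through them). -/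
open Matrix

set_option maxHeartbeats 4000000

/-- For six pairwise distinct points on the conic, the Pascal points
`AE ∩ BF` and `AD ∩ CF` of the array `[A B C; F E D]` are linearly independent
vectors of `ℂ³`; in particular the pascal of the array is a well-defined line. -/
theorem pascal_points_linearIndependent (a b c d e f : ℂ)
    (hdist : List.Pairwise (· ≠ ·) [a, b, c, d, e, f]) :
    LinearIndependent ℂ
      ![(P a ⨯₃ P e) ⨯₃ (P b ⨯₃ P f),
        (P a ⨯₃ P d) ⨯₃ (P c ⨯₃ P f)] := by
  simp only [List.pairwise_cons, List.mem_cons, List.not_mem_nil] at hdist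
  obtain ⟨h1, h2, h3, h4, h5, -⟩ := hdist
  have hab : a ≠ b := h1 b (by tauto)
  have hac : a ≠ c := h1 c (by tauto)
  have had : a ≠ d := h1 d (by tauto)
  have hae : a ≠ e := h1 e (by tauto)
  have haf : a ≠ f := h1 f (by tauto)
  have hbc : b ≠ c := h2 c (by tauto)
  have hbd : b ≠ d := h2 d (by tauto)
  have hbe : b ≠ e := h2 e (by tauto)
  have hbf : b ≠ f := h2 f (by tauto)
  have hcd : c ≠ d := h3 d (by tauto)
  have hce : c ≠ e := h3 e (by tauto)
  have hcf : c ≠ f := h3 f (by tauto)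
  have hde : d ≠ e := h4 e (by tauto)
  have hdf : d ≠ f := h4 f (by tauto)
  have hef : e ≠ f := h5 f (by tauto)
  rw [← crossProduct_ne_zero_iff_linearIndependent]
  intro hX
  have hX0 := congrFun hX 0
  have hX1 := congrFun hX 1
  have hX2 := congrFun hX 2
  simp only [cross_apply, P, cons_val_zero, cons_val_one, head_cons, cons_val_two, tail_cons,
    Pi.zero_apply] at hX0 hX1 hX2
  -- nonzero product
  have hN : (a-d)*(a-e)*(a-f)*(b-f)*(c-f)*((a-b)*((a-c)*(d-e))) ≠ 0 := by
    apply mul_ne_zero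
    apply mul_ne_zero
    apply mul_ne_zero
    apply mul_ne_zero
    apply mul_ne_zero
    all_goals
      first
      | exact sub_ne_zero.mpr had
      | exact sub_ne_zero.mpr hae
      | exact sub_ne_zero.mpr haf
      | exact sub_ne_zero.mpr hbf
      | exact sub_ne_zero.mpr hcf
      | exact mul_ne_zero (sub_ne_zero.mpr hab)
          (mul_ne_zero (sub_ne_zero.mpr hac) (sub_ne_zero.mpr hde))
  have hprod : b * d - c * e = 0 := by
    have key : (a-d)*(a-e)*(a-f)*(b-f)*(c-f)*((a-b)*((a-c)*(d-e))) * (b*d - c*e) = 0 := by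
      linear_combination (b*d*(a-c) - c*e*(a-b)) * hX2 - (b-c) * hX0
    exact (mul_eq_zero.mp key).resolve_left hN
  have hsum : (c - b) - (d - e) = 0 := by
    have key : (a-d)*(a-e)*(a-f)*(b-f)*(c-f)*((a-b)*((a-c)*(d-e))) * ((c-b) - (d-e)) = 0 := by
      linear_combination (a*(c-b) + a*(e-d) - b*e + c*d) * hX2 - (b-c) * hX1
    exact (mul_eq_zero.mp key).resolve_left hN
  have : (b - c) * (b - e) = 0 := by linear_combination (-b) * hsum - hprod
  rcases mul_eq_zero.mp this with h | h
  · exact hbc (sub_eq_zero.mp h)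
  · exact hbe (sub_eq_zero.mp h)
end

section
/- (Steiner's theorem, for the pascals k(1,23), k(2,13), k(3,12).) Let a, b, c, d, e, f be pairwise distinct complex numbers and A = P(a), …, F = P(f). Define three pascal line vectors: N₁ = (AE ∩ BF) ×₃ (BD ∩ CE) for the array [A B C; F E D]; N₂ = (AF ∩ BD) ×₃ (BE ∩ CF) for the array [A B C; D F E]; N₃ = (AD ∩ BE) ×₃ (BF ∩ CD) for the array [A B C; E D F], where each intersection point XY ∩ ZW is the double cross product (X ×₃ Y) ×₃ (Z ×₃ W). Then the three lines N₁, N₂, N₃ are concurrent: the determinant of the 3×3 matrix with rows N₁, N₂, N₃ is zero. -/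
open Matrix

private def n1 (a b c d e f : ℂ) : Fin 3 → ℂ :=
  ![b*c*e*f - b*c*d*f - a*c*e*f + a*c*d*e + a*b*d*f - a*b*d*e,
    c*d*f - c*d*e - b*e*f + b*d*e - b*c*e + b*c*d + a*e*f - a*d*f + a*c*f - a*c*d - a*b*f + a*b*e,
    -(c*f) + c*e + b*f - b*d - a*e + a*d]

private def n2 (a b c d e f : ℂ) : Fin 3 → ℂ :=
  ![b*c*d*f - b*c*d*e + a*c*e*f - a*c*d*f - a*b*e*f + a*b*d*e,
    -(c*e*f) + c*d*e + b*e*f - b*d*f - b*c*f + b*c*e + a*d*f - a*d*e - a*c*e + a*c*d + a*b*f - a*b*d,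
    c*f - c*d - b*e + b*d - a*f + a*e]

private def n3 (a b c d e f : ℂ) : Fin 3 → ℂ :=
  ![-(b*c*e*f) + b*c*d*e + a*c*d*f - a*c*d*e + a*b*e*f - a*b*d*f,
    c*e*f - c*d*f + b*d*f - b*d*e + b*c*f - b*c*d - a*e*f + a*d*e - a*c*f + a*c*e - a*b*e + a*b*d,
    -(c*e) + c*d - b*f + b*e + a*f - a*d]

private lemma det_smul_rows (g1 g2 g3 : ℂ) (u v w : Fin 3 → ℂ) :
    Matrix.det ![g1 • u, g2 • v, g3 • w] = g1 * g2 * g3 * Matrix.det ![u, v, w] := by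
  erw [Matrix.det_fin_three, Matrix.det_fin_three]
  simp [Matrix.det_fin_three]
  ring

private lemma hrow1 (a b c d e f : ℂ) :
    ((P a ⨯₃ P e) ⨯₃ (P b ⨯₃ P f)) ⨯₃ ((P b ⨯₃ P d) ⨯₃ (P c ⨯₃ P e))
      = ((a-e)*(b-d)*(b-e)*(b-f)*(c-e)) • n1 a b c d e f := by
  funext i
  fin_cases i <;> simp [P, crossProduct, n1, Pi.smul_apply, smul_eq_mul] <;> ring

private lemma hrow2 (a b c d e f : ℂ) :
    ((P a ⨯₃ P f) ⨯₃ (P b ⨯₃ P d)) ⨯₃ ((P b ⨯₃ P e) ⨯₃ (P c ⨯₃ P f))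
      = ((a-f)*(b-d)*(b-e)*(b-f)*(c-f)) • n2 a b c d e f := by
  funext i
  fin_cases i <;> simp [P, crossProduct, n2, Pi.smul_apply, smul_eq_mul] <;> ring

private lemma hrow3 (a b c d e f : ℂ) :
    ((P a ⨯₃ P d) ⨯₃ (P b ⨯₃ P e)) ⨯₃ ((P b ⨯₃ P f) ⨯₃ (P c ⨯₃ P d))
      = ((a-d)*(b-d)*(b-e)*(b-f)*(c-d)) • n3 a b c d e f := by
  funext i
  fin_cases i <;> simp [P, crossProduct, n3, Pi.smul_apply, smul_eq_mul] <;> ring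

private lemma hdet_n (a b c d e f : ℂ) :
    Matrix.det ![n1 a b c d e f, n2 a b c d e f, n3 a b c d e f] = 0 := by
  erw [Matrix.det_fin_three]
  simp [Matrix.det_fin_three, n1, n2, n3]
  ring

/-- **Steiner's theorem** for the pascals `k(1,23)`, `k(2,13)`, `k(3,12)`:
the pascals of the arrays `[A B C; F E D]`, `[A B C; D F E]`, `[A B C; E D F]`
are concurrent. -/
theorem steiner_concurrent (a b c d e f : ℂ)
    (hdist : List.Pairwise (· ≠ ·) [a, b, c, d, e, f]) :
    Matrix.det
      ![((P a ⨯₃ P e) ⨯₃ (P b ⨯₃ P f)) ⨯₃ ((P b ⨯₃ P d) ⨯₃ (P c ⨯₃ P e)),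
        ((P a ⨯₃ P f) ⨯₃ (P b ⨯₃ P d)) ⨯₃ ((P b ⨯₃ P e) ⨯₃ (P c ⨯₃ P f)),
        ((P a ⨯₃ P d) ⨯₃ (P b ⨯₃ P e)) ⨯₃ ((P b ⨯₃ P f) ⨯₃ (P c ⨯₃ P d))] = 0 := by
  rw [hrow1, hrow2, hrow3, det_smul_rows, hdet_n, mul_zero]
end

section
/- (Kirkman's theorem, for the pascals k(1,23), k(1,24), k(1,34).) Let a, b, c, d, e, f be pairwise distinct complex numbers and A = P(a), …, F = P(f). Define three pascal line vectors: N₁ = (AE ∩ BF) ×₃ (BD ∩ CE) for the array [A B C; F E D]; N₂ = (AE ∩ CD) ×₃ (BD ∩ EF) for the array [A D F; C E B]; N₃ = (AD ∩ EF) ×₃ (BF ∩ CD) for the array [A F C; E D B], where each intersection point XY ∩ ZW is the double cross product (X ×₃ Y) ×₃ (Z ×₃ W). Then the three lines N₁, N₂, N₃ are concurrent: the determinant of the 3×3 matrix with rows N₁, N₂, N₃ is zero. -/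
open Matrix

private lemma det_smul_rows_eq_zero (g₁ g₂ g₃ : ℂ) (n₁ n₂ n₃ : Fin 3 → ℂ)
    (h : Matrix.det ![n₁, n₂, n₃] = 0) :
    Matrix.det ![g₁ • n₁, g₂ • n₂, g₃ • n₃] = 0 := by
  erw [det_fin_three] at h ⊢
  simp only [ Matrix.cons_val', Matrix.cons_val_zero, Matrix.cons_val_one,
    Matrix.head_cons, Matrix.empty_val', Matrix.cons_val_fin_one, Matrix.head_fin_const,
    Matrix.cons_val_two, Matrix.tail_cons, Pi.smul_apply, smul_eq_mul] at h ⊢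
  linear_combination g₁ * g₂ * g₃ * h

set_option maxHeartbeats 2000000 in
/-- **Kirkman's theorem** for the pascals `k(1,23)`, `k(1,24)`, `k(1,34)`:
the pascals of the arrays `[A B C; F E D]`, `[A D F; C E B]`, `[A F C; E D B]`
are concurrent. -/
theorem kirkman_concurrent (a b c d e f : ℂ)
    (hdist : List.Pairwise (· ≠ ·) [a, b, c, d, e, f]) :
    Matrix.det
      ![((P a ⨯₃ P e) ⨯₃ (P b ⨯₃ P f)) ⨯₃ ((P b ⨯₃ P d) ⨯₃ (P c ⨯₃ P e)),
        ((P a ⨯₃ P e) ⨯₃ (P c ⨯₃ P d)) ⨯₃ ((P b ⨯₃ P d) ⨯₃ (P e ⨯₃ P f)),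
        ((P a ⨯₃ P d) ⨯₃ (P e ⨯₃ P f)) ⨯₃ ((P b ⨯₃ P f) ⨯₃ (P c ⨯₃ P d))] = 0 := by
  have h1 : ((P a ⨯₃ P e) ⨯₃ (P b ⨯₃ P f)) ⨯₃ ((P b ⨯₃ P d) ⨯₃ (P c ⨯₃ P e)) =
      ((a - e)*(b - d)*(b - e)*(b - f)*(c - e)) •
      ![b*c*e*f - b*c*d*f - a*c*e*f + a*c*d*e + a*b*d*f - a*b*d*e,
        c*d*f - c*d*e - b*e*f + b*d*e - b*c*e + b*c*d + a*e*f - a*d*f + a*c*f - a*c*d - a*b*f + a*b*e,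
        - c*f + c*e + b*f - b*d - a*e + a*d] := by
    funext i
    fin_cases i <;>
      simp [P, crossProduct, Matrix.cons_val_zero, Matrix.cons_val_one, Matrix.head_cons] <;> ring
  have h2 : ((P a ⨯₃ P e) ⨯₃ (P c ⨯₃ P d)) ⨯₃ ((P b ⨯₃ P d) ⨯₃ (P e ⨯₃ P f)) =
      ((a - e)*(b - d)*(c - d)*(d - e)*(e - f)) •
      ![c*d*e*f - b*c*d*f - a*c*e*f + a*b*e*f - a*b*d*e + a*b*c*d,
        - d*e*f - c*d*e - b*e*f + b*d*f + b*d*e + b*c*f + a*d*e + a*c*f + a*c*e - a*c*d - a*b*f - a*b*c,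
        e*f - c*f + c*d - b*d - a*e + a*b] := by
    funext i
    fin_cases i <;>
      simp [P, crossProduct, Matrix.cons_val_zero, Matrix.cons_val_one, Matrix.head_cons] <;> ring
  have h3 : ((P a ⨯₃ P d) ⨯₃ (P e ⨯₃ P f)) ⨯₃ ((P b ⨯₃ P f) ⨯₃ (P c ⨯₃ P d)) =
      ((a - d)*(b - f)*(c - d)*(d - f)*(e - f)) •
      ![- c*d*e*f + b*c*e*f + a*c*d*e - a*b*e*f + a*b*d*f - a*b*c*d,
        d*e*f + c*d*f - b*d*f - b*c*f - b*c*e + b*c*d + a*e*f - a*d*f - a*d*e - a*c*e + a*b*e + a*b*c,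
        - e*f + c*e - c*d + b*f + a*d - a*b] := by
    funext i
    fin_cases i <;>
      simp [P, crossProduct, Matrix.cons_val_zero, Matrix.cons_val_one, Matrix.head_cons] <;> ring
  rw [h1, h2, h3]
  apply det_smul_rows_eq_zero
  erw [det_fin_three]
  simp only [Matrix.cons_val', Matrix.cons_val_zero, Matrix.cons_val_one, Matrix.head_cons,
    Matrix.empty_val', Matrix.cons_val_fin_one, Matrix.head_fin_const, Matrix.cons_val_two,
    Matrix.tail_cons]
  ring
end

section
/- Let a, b, c, d, e, f be pairwise distinct complex numbers and A = P(a), …, F = P(f). Consider the three pascals of the arrays [A B C; F E D], [A D F; B C E], [A C F; B D E], with line vectors N₁ = (BD ∩ CE) ×₃ (AD ∩ CF), N₂ = (AC ∩ BD) ×₃ (CF ∩ DE), N₃ = (AD ∩ BC) ×₃ (CE ∩ DF), where each intersection point XY ∩ ZW is the double cross product (X ×₃ Y) ×₃ (Z ×₃ W). Then all three pascals pass through the point AE ∩ BF = (A ×₃ E) ×₃ (B ×₃ F): the dot product Nᵢ ⬝ (AE ∩ BF) is zero for i = 1, 2, 3. In particular these three pascals are concurrent. -/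
open Matrix

/-- A scaled representative of the chord of the conic through `P s` and `P t`. -/
noncomputable def Q (s t : ℂ) : Fin 3 → ℂ := ![s * t, -(s + t), 1]

lemma PQ (s t : ℂ) : P s ⨯₃ P t = (t - s) • Q s t := by
  simp [P, Q, cross_apply]
  constructor <;> ring

set_option maxHeartbeats 1000000 in
/-- The pascals of the arrays `[A B C; F E D]`, `[A D F; B C E]`, `[A C F; B D E]`
all pass through the point `AE ∩ BF`; in particular they are concurrent. -/
theorem pascals_through_AE_meet_BF (a b c d e f : ℂ)
    (hdist : List.Pairwise (· ≠ ·) [a, b, c, d, e, f]) :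
    (((P b ⨯₃ P d) ⨯₃ (P c ⨯₃ P e)) ⨯₃ ((P a ⨯₃ P d) ⨯₃ (P c ⨯₃ P f))) ⬝ᵥ
        ((P a ⨯₃ P e) ⨯₃ (P b ⨯₃ P f)) = 0 ∧
    (((P a ⨯₃ P c) ⨯₃ (P b ⨯₃ P d)) ⨯₃ ((P c ⨯₃ P f) ⨯₃ (P d ⨯₃ P e))) ⬝ᵥ
        ((P a ⨯₃ P e) ⨯₃ (P b ⨯₃ P f)) = 0 ∧
    (((P a ⨯₃ P d) ⨯₃ (P b ⨯₃ P c)) ⨯₃ ((P c ⨯₃ P e) ⨯₃ (P d ⨯₃ P f))) ⬝ᵥ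
        ((P a ⨯₃ P e) ⨯₃ (P b ⨯₃ P f)) = 0 := by
  refine ⟨?_, ?_, ?_⟩ <;>
  · simp only [PQ, LinearMap.map_smul, LinearMap.smul_apply, smul_dotProduct,
      dotProduct_smul, smul_smul, smul_eq_mul]
    convert mul_zero _
    simp only [Q, cross_apply, dotProduct, Fin.sum_univ_three, cons_val_zero, cons_val_one,
        head_cons, cons_val_two, tail_cons]
    ring
end

section
/- Let L₁, L₂, L₃ ∈ ℂ³ be vectors with det of the matrix with rows L₁, L₂, L₃ nonzero (three non-concurrent lines). Then there is NO sextuple of pairwise distinct complex numbers (a, b, c, d, e, f), with A = P(a), …, F = P(f), such that simultaneously: all three Pascal points AE ∩ BF, BD ∩ CE, AD ∩ CF of the array [A B C; F E D] lie on L₁; all three Pascal points AF ∩ BD, BE ∩ CF, AE ∩ CD of the array [A B C; D F E] lie on L₂; and all three Pascal points AD ∩ BE, BF ∩ CD, AF ∩ CE of the array [A B C; E D F] lie on L₃. (The intersection number of the Steiner triple {k(1,23), k(2,13), k(3,12)} is 0.) -/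
open Matrix

/-- The "dual" vector of the chord of the conic through `P s` and `P t`. -/
noncomputable def g (s t : ℂ) : Fin 3 → ℂ := ![s*t, -(s+t), 1]

lemma qred (s t u v : ℂ) :
    (P s ⨯₃ P t) ⨯₃ (P u ⨯₃ P v) = ((t-s)*(v-u)) • (g s t ⨯₃ g u v) := by
  ext i; fin_cases i <;> simp [P, g, cross_apply] <;> ring

lemma cross_eq_smul_sub (x u v : Fin 3 → ℂ) :
    x ⨯₃ (u ⨯₃ v) = (x ⬝ᵥ v) • u - (x ⬝ᵥ u) • v := by
  ext i; fin_cases i <;> simp [cross_apply, dotProduct, Fin.sum_univ_three] <;> ring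

lemma gbb (b w w' : ℂ) : g b w ⨯₃ g b w' = (w' - w) • P b := by
  ext i; fin_cases i <;> simp [g, P, cross_apply] <;> ring

lemma gyy (a c y : ℂ) : g a y ⨯₃ g c y = (c - a) • P y := by
  ext i; fin_cases i <;> simp [g, P, cross_apply] <;> ring

lemma par_eq {X : Fin 3 → ℂ} {b y : ℂ} (hX : X ≠ 0)
    (h1 : X ⨯₃ P b = 0) (h2 : X ⨯₃ P y = 0) : b = y := by
  have a1 := congr_fun h1 1
  have a2 := congr_fun h1 2
  have b2 := congr_fun h2 2
  simp only [cross_apply, P, Matrix.cons_val_zero, Matrix.cons_val_one, Matrix.head_cons,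
    Matrix.cons_val_two, Matrix.tail_cons, Pi.zero_apply] at a1 a2 b2
  have hX0 : X 0 ≠ 0 := by
    intro h0
    apply hX
    funext i; fin_cases i
    · exact h0
    · show X 1 = 0; linear_combination -a2 + b * h0
    · show X 2 = 0; linear_combination a1 + b^2 * h0
  have : X 0 * b = X 0 * y := by linear_combination a2 - b2
  exact mul_left_cancel₀ hX0 this

lemma prop_of_cross_eq_zero {u v : Fin 3 → ℂ} (hu : u ≠ 0) (h : u ⨯₃ v = 0) :
    ∃ c : ℂ, v = c • u := by
  have e0 := congr_fun h 0
  have e1 := congr_fun h 1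
  have e2 := congr_fun h 2
  simp only [cross_apply, Matrix.cons_val_zero, Matrix.cons_val_one, Matrix.head_cons,
    Matrix.cons_val_two, Matrix.tail_cons, Pi.zero_apply] at e0 e1 e2
  have huc : u 0 ≠ 0 ∨ u 1 ≠ 0 ∨ u 2 ≠ 0 := by
    by_contra hc
    push_neg at hc
    exact hu (by funext i; fin_cases i <;> simp [hc.1, hc.2.1, hc.2.2])
  rcases huc with h0 | h1 | h2
  · refine ⟨v 0 / u 0, funext fun i => ?_⟩
    fin_cases i
    · show v 0 = v 0 / u 0 * u 0; field_simp
    · show v 1 = v 0 / u 0 * u 1; field_simp; linear_combination e2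
    · show v 2 = v 0 / u 0 * u 2; field_simp; linear_combination -e1
  · refine ⟨v 1 / u 1, funext fun i => ?_⟩
    fin_cases i
    · show v 0 = v 1 / u 1 * u 0; field_simp; linear_combination -e2
    · show v 1 = v 1 / u 1 * u 1; field_simp
    · show v 2 = v 1 / u 1 * u 2; field_simp; linear_combination e0
  · refine ⟨v 2 / u 2, funext fun i => ?_⟩
    fin_cases i
    · show v 0 = v 2 / u 2 * u 0; field_simp; linear_combination e1
    · show v 1 = v 2 / u 2 * u 1; field_simp; linear_combination -e0
    · show v 2 = v 2 / u 2 * u 2; field_simp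

lemma g_cross_ne_zero {a y b w : ℂ} (hab : a ≠ b) (haw : a ≠ w) :
    g a y ⨯₃ g b w ≠ 0 := by
  intro h0
  have e0 := congr_fun h0 0
  have e1 := congr_fun h0 1
  simp [g, cross_apply] at e0 e1
  have : (a - b) * (a - w) = 0 := by linear_combination -a*e0 + e1
  rcases mul_eq_zero.mp this with h | h
  · exact hab (sub_eq_zero.mp h)
  · exact haw (sub_eq_zero.mp h)

lemma row_ne {a b c y w w' : ℂ} (hab : a ≠ b) (haw : a ≠ w) (hbc : b ≠ c) (hby : b ≠ y)
    (hac : a ≠ c) (hww : w ≠ w') :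
    (g a y ⨯₃ g b w) ⨯₃ (g b w' ⨯₃ g c y) ≠ 0 := by
  intro h
  have hX : g a y ⨯₃ g b w ≠ 0 := g_cross_ne_zero hab haw
  have hY : g b w' ⨯₃ g c y ≠ 0 := g_cross_ne_zero hbc hby
  obtain ⟨k, hk⟩ := prop_of_cross_eq_zero hX h
  have hk0 : k ≠ 0 := by
    rintro rfl
    rw [zero_smul] at hk
    exact hY hk
  set X := g a y ⨯₃ g b w with hXdef
  have d1 : X ⬝ᵥ g a y = 0 := by
    rw [dotProduct_comm]; exact dot_self_cross _ _
  have d2 : X ⬝ᵥ g b w = 0 := by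
    rw [dotProduct_comm]; exact dot_cross_self _ _
  have d3 : X ⬝ᵥ g b w' = 0 := by
    have h' : g b w' ⬝ᵥ (g b w' ⨯₃ g c y) = 0 := dot_self_cross _ _
    rw [hk, dotProduct_smul] at h'
    have h'' := (smul_eq_zero.mp h').resolve_left hk0
    rw [dotProduct_comm]; exact h''
  have d4 : X ⬝ᵥ g c y = 0 := by
    have h' : g c y ⬝ᵥ (g b w' ⨯₃ g c y) = 0 := dot_cross_self _ _
    rw [hk, dotProduct_smul] at h'
    have h'' := (smul_eq_zero.mp h').resolve_left hk0
    rw [dotProduct_comm]; exact h''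
  have hb : X ⨯₃ P b = 0 := by
    have h1 : X ⨯₃ (g b w ⨯₃ g b w') = 0 := by
      rw [cross_eq_smul_sub, d2, d3, zero_smul, zero_smul, sub_zero]
    rw [gbb, LinearMap.map_smul, smul_eq_zero] at h1
    exact h1.resolve_left (sub_ne_zero.mpr (Ne.symm hww))
  have hy : X ⨯₃ P y = 0 := by
    have h1 : X ⨯₃ (g a y ⨯₃ g c y) = 0 := by
      rw [cross_eq_smul_sub, d1, d4, zero_smul, zero_smul, sub_zero]
    rw [gyy, LinearMap.map_smul, smul_eq_zero] at h1
    exact h1.resolve_left (sub_ne_zero.mpr (Ne.symm hac))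
  exact hby (par_eq hX hb hy)

set_option maxHeartbeats 2000000 in
lemma detlam (a b c d e f : ℂ) :
    Matrix.det ![(g a e ⨯₃ g b f) ⨯₃ (g b d ⨯₃ g c e),
                 (g a f ⨯₃ g b d) ⨯₃ (g b e ⨯₃ g c f),
                 (g a d ⨯₃ g b e) ⨯₃ (g b f ⨯₃ g c d)] = 0 := by
  erw [det_fin_three]
  simp [g, cross_apply]
  ring

/-- The intersection number of the Steiner triple `{k(1,23), k(2,13), k(3,12)}`
is `0`: for three non-concurrent lines `L₁, L₂, L₃` there is no hexad of
pairwise distinct points on the conic whose pascals for the arrays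
`[A B C; F E D]`, `[A B C; D F E]`, `[A B C; E D F]` are `L₁, L₂, L₃`. -/
theorem steiner_triple_intersection_zero (L₁ L₂ L₃ : Fin 3 → ℂ)
    (hL : Matrix.det ![L₁, L₂, L₃] ≠ 0) :
    ¬ ∃ a b c d e f : ℂ,
      List.Pairwise (· ≠ ·) [a, b, c, d, e, f] ∧
      -- array [A B C; F E D] has pascal L₁
      L₁ ⬝ᵥ ((P a ⨯₃ P e) ⨯₃ (P b ⨯₃ P f)) = 0 ∧
      L₁ ⬝ᵥ ((P b ⨯₃ P d) ⨯₃ (P c ⨯₃ P e)) = 0 ∧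
      L₁ ⬝ᵥ ((P a ⨯₃ P d) ⨯₃ (P c ⨯₃ P f)) = 0 ∧
      -- array [A B C; D F E] has pascal L₂
      L₂ ⬝ᵥ ((P a ⨯₃ P f) ⨯₃ (P b ⨯₃ P d)) = 0 ∧
      L₂ ⬝ᵥ ((P b ⨯₃ P e) ⨯₃ (P c ⨯₃ P f)) = 0 ∧
      L₂ ⬝ᵥ ((P a ⨯₃ P e) ⨯₃ (P c ⨯₃ P d)) = 0 ∧
      -- array [A B C; E D F] has pascal L₃
      L₃ ⬝ᵥ ((P a ⨯₃ P d) ⨯₃ (P b ⨯₃ P e)) = 0 ∧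
      L₃ ⬝ᵥ ((P b ⨯₃ P f) ⨯₃ (P c ⨯₃ P d)) = 0 ∧
      L₃ ⬝ᵥ ((P a ⨯₃ P f) ⨯₃ (P c ⨯₃ P e)) = 0 := by
  rintro ⟨a, b, c, d, e, f, hdist, h11, h12, h13, h21, h22, h23, h31, h32, h33⟩
  simp only [List.pairwise_cons, List.mem_cons, List.not_mem_nil] at hdist
  simp [List.pairwise_cons] at hdist
  obtain ⟨⟨hab, hac, had, hae, haf⟩, ⟨hbc, hbd, hbe, hbf⟩, ⟨hcd, hce, hcf⟩, ⟨hde, hdf⟩, hef⟩ :=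
    hdist
  have red : ∀ (L : Fin 3 → ℂ) (s t u v : ℂ), s ≠ t → u ≠ v →
      L ⬝ᵥ ((P s ⨯₃ P t) ⨯₃ (P u ⨯₃ P v)) = 0 → L ⬝ᵥ (g s t ⨯₃ g u v) = 0 := by
    intro L s t u v hst huv h
    rw [qred, dotProduct_smul, smul_eq_mul, mul_eq_zero] at h
    rcases h with h | h
    · exact absurd h
        (mul_ne_zero (sub_ne_zero.mpr (Ne.symm hst)) (sub_ne_zero.mpr (Ne.symm huv)))
    · exact h
  have r11 := red L₁ a e b f hae hbf h11
  have r12 := red L₁ b d c e hbd hce h12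
  have r21 := red L₂ a f b d haf hbd h21
  have r22 := red L₂ b e c f hbe hcf h22
  have r31 := red L₃ a d b e had hbe h31
  have r32 := red L₃ b f c d hbf hcd h32
  have cz : ∀ (L u v : Fin 3 → ℂ), L ⬝ᵥ u = 0 → L ⬝ᵥ v = 0 → (u ⨯₃ v) ⨯₃ L = 0 := by
    intro L u v h1 h2
    have h3 : L ⨯₃ (u ⨯₃ v) = 0 := by
      rw [cross_eq_smul_sub, h1, h2, zero_smul, zero_smul, sub_zero]
    rw [← cross_anticomm, h3, neg_zero]
  obtain ⟨c₁, hc1⟩ := prop_of_cross_eq_zero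
    (row_ne hab haf hbc hbe hac (Ne.symm hdf)) (cz L₁ _ _ r11 r12)
  obtain ⟨c₂, hc2⟩ := prop_of_cross_eq_zero
    (row_ne hab had hbc hbf hac hde) (cz L₂ _ _ r21 r22)
  obtain ⟨c₃, hc3⟩ := prop_of_cross_eq_zero
    (row_ne hab hae hbc hbd hac hef) (cz L₃ _ _ r31 r32)
  apply hL
  rw [hc1, hc2, hc3]; erw [det_fin_three]
  have h0 := detlam a b c d e f
  erw [det_fin_three] at h0
  simp only [Matrix.cons_val', Matrix.cons_val_zero, Matrix.cons_val_one, Matrix.head_cons,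
    Matrix.empty_val', Matrix.cons_val_fin_one, Matrix.head_fin_const, Matrix.cons_val_two,
    Matrix.tail_cons, Pi.smul_apply, smul_eq_mul] at h0 ⊢
  linear_combination (c₁ * c₂ * c₃) * h0
end

section
/- (Construction of hexads with a prescribed pascal.) Let a, b, c, f be pairwise distinct complex numbers, L ∈ ℂ³ a vector with L ⬝ P(x) ≠ 0 for each x ∈ {a, b, c, f} (i.e. the four points A = P(a), B = P(b), C = P(c), F = P(f) are off the line L). Set Q₁ = (B ×₃ F) ×₃ L and Q₂ = (C ×₃ F) ×₃ L. Suppose e, d ∈ ℂ satisfy e ≠ a, d ≠ a, det[P(a); Q₁; P(e)] = 0 and det[P(a); Q₂; P(d)] = 0 (i.e. E = P(e) lies on the line through A and Q₁, and D = P(d) lies on the line through A and Q₂). Then all three Pascal points AE ∩ BF, BD ∩ CE, AD ∩ CF of the array [A B C; F E D] lie on L: in particular L ⬝ ((B ×₃ D) ×₃ (C ×₃ E)) = 0. -/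
open Matrix

set_option maxHeartbeats 2000000 in
/-- Construction of hexads with a prescribed pascal: given four points
`A, B, C, F` of the conic off the line `L`, let `Q₁ = BF ∩ L`, `Q₂ = CF ∩ L`,
and choose `E` on the line `AQ₁` and `D` on the line `AQ₂` (both on the conic,
different from `A`).  Then all three Pascal points of the array `[A B C; F E D]`
lie on `L`. -/
theorem pascal_variety_construction (a b c f : ℂ) (L : Fin 3 → ℂ)
    (hdist : List.Pairwise (· ≠ ·) [a, b, c, f])
    (ha : L ⬝ᵥ P a ≠ 0) (hb : L ⬝ᵥ P b ≠ 0) (hc : L ⬝ᵥ P c ≠ 0)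
    (hf : L ⬝ᵥ P f ≠ 0)
    (e d : ℂ) (hea : e ≠ a) (hda : d ≠ a)
    (he : Matrix.det ![P a, (P b ⨯₃ P f) ⨯₃ L, P e] = 0)
    (hd : Matrix.det ![P a, (P c ⨯₃ P f) ⨯₃ L, P d] = 0) :
    L ⬝ᵥ ((P a ⨯₃ P e) ⨯₃ (P b ⨯₃ P f)) = 0 ∧
    L ⬝ᵥ ((P b ⨯₃ P d) ⨯₃ (P c ⨯₃ P e)) = 0 ∧
    L ⬝ᵥ ((P a ⨯₃ P d) ⨯₃ (P c ⨯₃ P f)) = 0 := by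
  have hdist' := hdist
  simp only [List.pairwise_cons, List.mem_cons, List.not_mem_nil, List.mem_singleton,
    or_false, List.Pairwise.nil, and_true, forall_eq_or_imp, forall_eq] at hdist'
  obtain ⟨⟨hab, hac, haf⟩, ⟨hbc, hbf⟩, hcf, -⟩ := hdist'
  have hb' : L 0 + b * L 1 + b ^ 2 * L 2 ≠ 0 := fun h => hb (by
    simp only [P, cross_apply, Matrix.det_fin_three, dotProduct, Fin.sum_univ_three, Matrix.cons_val_zero, Matrix.cons_val_one, Matrix.head_cons, Matrix.cons_val_two, Matrix.tail_cons]; linear_combination h)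
  have hf' : L 0 + f * L 1 + f ^ 2 * L 2 ≠ 0 := fun h => hf (by
    simp only [P, cross_apply, Matrix.det_fin_three, dotProduct, Fin.sum_univ_three, Matrix.cons_val_zero, Matrix.cons_val_one, Matrix.head_cons, Matrix.cons_val_two, Matrix.tail_cons]; linear_combination h)
  erw [Matrix.det_fin_three] at he hd
  simp only [P, cross_apply, Matrix.det_fin_three, dotProduct, Fin.sum_univ_three, Matrix.cons_val_zero, Matrix.cons_val_one, Matrix.head_cons, Matrix.cons_val_two, Matrix.tail_cons] at he hd
  have h1 : (1 * L 0 + (-1) * b * f * L 2 + 1 * a * L 1 + 1 * a * f * L 2 + 1 * a * b * L 2) * e + ((-1) * f * L 0 + (-1) * b * L 0 + (-1) * b * f * L 1 + 1 * a * L 0 + (-1) * a * b * f * L 2) = 0 := by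
    have h0 : (e - a) * ((f - b) * ((1 * L 0 + (-1) * b * f * L 2 + 1 * a * L 1 + 1 * a * f * L 2 + 1 * a * b * L 2) * e + ((-1) * f * L 0 + (-1) * b * L 0 + (-1) * b * f * L 1 + 1 * a * L 0 + (-1) * a * b * f * L 2))) = 0 := by linear_combination he
    exact (mul_eq_zero.mp ((mul_eq_zero.mp h0).resolve_left
      (sub_ne_zero.mpr hea))).resolve_left (sub_ne_zero.mpr (Ne.symm hbf))
  have h2 : (1 * L 0 + (-1) * c * f * L 2 + 1 * a * L 1 + 1 * a * f * L 2 + 1 * a * c * L 2) * d + ((-1) * f * L 0 + (-1) * c * L 0 + (-1) * c * f * L 1 + 1 * a * L 0 + (-1) * a * c * f * L 2) = 0 := by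
    have h0 : (d - a) * ((f - c) * ((1 * L 0 + (-1) * c * f * L 2 + 1 * a * L 1 + 1 * a * f * L 2 + 1 * a * c * L 2) * d + ((-1) * f * L 0 + (-1) * c * L 0 + (-1) * c * f * L 1 + 1 * a * L 0 + (-1) * a * c * f * L 2))) = 0 := by linear_combination hd
    exact (mul_eq_zero.mp ((mul_eq_zero.mp h0).resolve_left
      (sub_ne_zero.mpr hda))).resolve_left (sub_ne_zero.mpr (Ne.symm hcf))
  have hW1 : (1 * L 0 + (-1) * b * f * L 2 + 1 * a * L 1 + 1 * a * f * L 2 + 1 * a * b * L 2) ≠ 0 := by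
    intro h
    have hVe : ((-1) * f * L 0 + (-1) * b * L 0 + (-1) * b * f * L 1 + 1 * a * L 0 + (-1) * a * b * f * L 2) = 0 := by linear_combination h1 - e * h
    have hT : (L 0 + b * L 1 + b ^ 2 * L 2) * (L 0 + f * L 1 + f ^ 2 * L 2) * (b - f) ^ 2 = 0 := by
      linear_combination ((-1) * f^2 * L 1 + (-1) * f^3 * L 2 + 2 * b * f * L 1 + 1 * b * f^2 * L 2 + (-1) * b^2 * L 1 + 1 * b^2 * f * L 2 + (-1) * b^3 * L 2) * hVe + (1 * f^2 * L 0 + (-2) * b * f * L 0 + (-1) * b * f^3 * L 2 + 1 * b^2 * L 0 + 2 * b^2 * f^2 * L 2 + (-1) * b^3 * f * L 2) * h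
    exact (mul_ne_zero (mul_ne_zero hb' hf') (pow_ne_zero 2 (sub_ne_zero.mpr hbf))) hT
  refine ⟨?_, ?_, ?_⟩
  · simp only [P, cross_apply, Matrix.det_fin_three, dotProduct, Fin.sum_univ_three, Matrix.cons_val_zero, Matrix.cons_val_one, Matrix.head_cons, Matrix.cons_val_two, Matrix.tail_cons]
    linear_combination -he
  · have key : (L ⬝ᵥ ((P b ⨯₃ P d) ⨯₃ (P c ⨯₃ P e))) * (1 * L 0 + (-1) * b * f * L 2 + 1 * a * L 1 + 1 * a * f * L 2 + 1 * a * b * L 2) ^ 2 = 0 := by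
      simp only [P, cross_apply, Matrix.det_fin_three, dotProduct, Fin.sum_univ_three, Matrix.cons_val_zero, Matrix.cons_val_one, Matrix.head_cons, Matrix.cons_val_two, Matrix.tail_cons]
      linear_combination ((-1) * d^2 * L 0^2 + 1 * e * d * L 0^2 + 1 * f * d * L 0^2 + 1 * c * e * d * L 0 * L 1 + 1 * c * e * d^2 * L 0 * L 2 + 1 * c * f * d * L 0 * L 1 + 1 * c * f * d^2 * L 0 * L 2 + (-1) * c^2 * d * L 0 * L 1 + (-1) * c^2 * d^2 * L 0 * L 2 + 1 * b * d * L 0^2 + (-1) * b * d^2 * L 0 * L 1 + (-1) * b * e * L 0^2 + (-1) * b * e * d^2 * L 0 * L 2 + (-1) * b * f * L 0^2 + 1 * b * f * d * L 0 * L 1 + (-1) * b * f * e * d * L 0 * L 2 + 1 * b * c * d * L 0 * L 1 + 1 * b * c * d^2 * L 0 * L 2 + (-1) * b * c * e * L 0 * L 1 + (-1) * b * c * f * L 0 * L 1 + 1 * b * c * f * d * L 1^2 + 1 * b * c * f * d^2 * L 1 * L 2 + (-1) * b * c * f * e * d * L 1 * L 2 + (-1) * b * c * f * e * d^2 * L 2^2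 + 1 * b * c^2 * L 0 * L 1 + 1 * b * c^2 * f * d * L 1 * L 2 + 1 * b * c^2 * f * d^2 * L 2^2 + 1 * b^2 * d * L 0 * L 1 + (-1) * b^2 * d^2 * L 0 * L 2 + 1 * b^2 * e * d * L 0 * L 2 + (-1) * b^2 * f * L 0 * L 1 + 1 * b^2 * f * d * L 0 * L 2 + 1 * b^2 * f * e * L 0 * L 2 + 1 * b^2 * f * e * d^2 * L 2^2 + (-1) * b^2 * c * L 0 * L 1 + (-1) * b^2 * c * e * L 0 * L 2 + (-1) * b^2 * c * f * L 1^2 + (-1) * b^2 * c * f * L 0 * L 2 + 1 * b^2 * c * f * e * L 1 * L 2 + 1 * b^2 * c^2 * L 0 * L 2 + (-1) * b^2 * c^2 * f * L 1 * L 2 + 1 * b^3 * d * L 0 * L 2 + (-1) * b^3 * f * L 0 * L 2 + (-1) * b^3 * f * e * d * L 2^2 + (-1) * b^3 * c * L 0 * L 2 + (-1) * b^3 * c * f * L 1 * L 2 + 1 * b^3 * c * f * e * L 2^2 + (-1) * b^3 * c^2 * f * L 2^2 + (-1) * a * d * L 0^2 + (-1) * a * d^2 * L 0 * L 1 + 1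 * a * e * d * L 0 * L 1 + (-1) * a * f * d^2 * L 0 * L 2 + 1 * a * f * e * d * L 0 * L 2 + (-1) * a * c * d * L 0 * L 1 + (-1) * a * c * d^2 * L 0 * L 2 + 1 * a * c * e * d * L 1^2 + 1 * a * c * e * d^2 * L 1 * L 2 + 1 * a * c * f * e * d * L 1 * L 2 + 1 * a * c * f * e * d^2 * L 2^2 + (-1) * a * c^2 * d * L 1^2 + (-1) * a * c^2 * d^2 * L 1 * L 2 + (-1) * a * c^2 * f * d * L 1 * L 2 + (-1) * a * c^2 * f * d^2 * L 2^2 + 1 * a * b * L 0^2 + (-1) * a * b * d^2 * L 1^2 + (-1) * a * b * e * L 0 * L 1 + 1 * a * b * e * d * L 0 * L 2 + (-1) * a * b * e * d^2 * L 1 * L 2 + 1 * a * b * f * d * L 0 * L 2 + (-1) * a * b * f * d^2 * L 1 * L 2 + (-1) * a * b * f * e * L 0 * L 2 + (-1) * a * b * f * e * d^2 * L 2^2 + 1 * a * b * c * L 0 * L 1 + (-1) * a * b * c * e * L 1^2 + 1 * a * b * c * e * d * L 1 * L 2 + 1 * a * b * c * e * d^2 * L 2^2 + 1 * a * b * c *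 f * d * L 1 * L 2 + 1 * a * b * c * f * d^2 * L 2^2 + (-1) * a * b * c * f * e * L 1 * L 2 + 1 * a * b * c^2 * L 1^2 + (-1) * a * b * c^2 * d * L 1 * L 2 + (-1) * a * b * c^2 * d^2 * L 2^2 + 1 * a * b * c^2 * f * L 1 * L 2 + 1 * a * b^2 * L 0 * L 1 + 1 * a * b^2 * d * L 1^2 + (-1) * a * b^2 * d * L 0 * L 2 + (-1) * a * b^2 * d^2 * L 1 * L 2 + (-1) * a * b^2 * e * L 0 * L 2 + 1 * a * b^2 * e * d * L 1 * L 2 + (-1) * a * b^2 * e * d^2 * L 2^2 + 1 * a * b^2 * f * d * L 1 * L 2 + (-1) * a * b^2 * f * d^2 * L 2^2 + 1 * a * b^2 * f * e * d * L 2^2 + 1 * a * b^2 * c * L 0 * L 2 + (-2) * a * b^2 * c * e * L 1 * L 2 + (-1) * a * b^2 * c * f * L 1 * L 2 + (-1) * a * b^2 * c * f * e * L 2^2 + 2 * a * b^2 * c^2 * L 1 * L 2 + 1 * a * b^2 * c^2 * f * L 2^2 + 1 * a * b^3 * L 0 * L 2 + 1 * a * b^3 * d * L 1 * L 2 + 1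 * a * b^3 * e * d * L 2^2 + 1 * a * b^3 * f * d * L 2^2 + (-1) * a * b^3 * c * e * L 2^2 + (-1) * a * b^3 * c * f * L 2^2 + 1 * a * b^3 * c^2 * L 2^2) * h1 + ((-1) * f * d * L 0^2 + 1 * c * d * L 0^2 + (-1) * b * d * L 0^2 + 1 * b * f * L 0^2 + (-2) * b * f * d * L 0 * L 1 + (-1) * b * c * L 0^2 + 1 * b * c * d * L 0 * L 1 + (-1) * b * c * f * d * L 0 * L 2 + 1 * b^2 * L 0^2 + (-1) * b^2 * d * L 0 * L 1 + 2 * b^2 * f * L 0 * L 1 + (-1) * b^2 * f * d * L 1^2 + (-1) * b^2 * f * d * L 0 * L 2 + (-1) * b^2 * c * L 0 * L 1 + 1 * b^2 * c * d * L 0 * L 2 + 1 * b^2 * c * f * L 0 * L 2 + (-1) * b^2 * c * f * d * L 1 * L 2 + 1 * b^3 * L 0 * L 1 + (-1) * b^3 * d * L 0 * L 2 + 1 * b^3 * f * L 1^2 + 1 * b^3 * f * L 0 * L 2 + (-1) * b^3 * f * d * L 1 * L 2 + (-1) * b^3 * c * L 0 * L 2 + 1 * b^3 * c * f * L 1 *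 L 2 + (-1) * b^3 * c * f * d * L 2^2 + 1 * b^4 * L 0 * L 2 + 1 * b^4 * f * L 1 * L 2 + 1 * b^4 * c * f * L 2^2 + 1 * a * d * L 0^2 + 1 * a * c * d * L 0 * L 1 + 1 * a * c * f * d * L 0 * L 2 + (-1) * a * b * L 0^2 + 1 * a * b * d * L 0 * L 1 + (-1) * a * b * f * d * L 0 * L 2 + (-1) * a * b * c * L 0 * L 1 + 1 * a * b * c * d * L 1^2 + 1 * a * b * c * d * L 0 * L 2 + (-1) * a * b * c * f * L 0 * L 2 + 1 * a * b * c * f * d * L 1 * L 2 + (-1) * a * b^2 * L 0 * L 1 + 1 * a * b^2 * d * L 0 * L 2 + 1 * a * b^2 * f * L 0 * L 2 + (-1) * a * b^2 * f * d * L 1 * L 2 + (-1) * a * b^2 * c * L 1^2 + (-1) * a * b^2 * c * L 0 * L 2 + 2 * a * b^2 * c * d * L 1 * L 2 + (-1) * a * b^2 * c * f * L 1 * L 2 + 1 * a * b^2 * c * f * d * L 2^2 + (-1) * a * b^3 * L 0 * L 2 + 1 * a * b^3 * f * L 1 * L 2 + (-1) * a * b^3 * f * d * L 2^2 + (-2)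 * a * b^3 * c * L 1 * L 2 + 1 * a * b^3 * c * d * L 2^2 + (-1) * a * b^3 * c * f * L 2^2 + 1 * a * b^4 * f * L 2^2 + (-1) * a * b^4 * c * L 2^2) * h2
    exact (mul_eq_zero.mp key).resolve_right (pow_ne_zero 2 hW1)
  · simp only [P, cross_apply, Matrix.det_fin_three, dotProduct, Fin.sum_univ_three, Matrix.cons_val_zero, Matrix.cons_val_one, Matrix.head_cons, Matrix.cons_val_two, Matrix.tail_cons]
    linear_combination -hd
end

section
/- (Uniqueness in the parametrization of the Pascal variety.) Let a, b, c, f be pairwise distinct complex numbers and L ∈ ℂ³ with L ⬝ P(x) ≠ 0 for each x ∈ {a, b, c, f}. Suppose (d, e) and (d′, e′) are two pairs of complex numbers such that (a, b, c, d, e, f) are pairwise distinct, (a, b, c, d′, e′, f) are pairwise distinct, and, writing A = P(a), …, with D = P(d), E = P(e) (resp. D′ = P(d′), E′ = P(e′)), all three Pascal points AE ∩ BF, BD ∩ CE, AD ∩ CF of the array [A B C; F E D] lie on L, and likewise all three Pascal points of [A B C; F E′ D′] lie on L. Then d = d′ and e = e′. Consequently, a hexad in the Pascal variety Π(s, ℓ)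 for the standard symbol s is uniquely determined by its points A, B, C, F. -/
open Matrix

/-- Key algebraic lemma: for fixed `a, b, f` on the conic and a line `L` not
through `P b`, the Pascal-point condition `L ⬝ᵥ ((P a ⨯₃ P x) ⨯₃ (P b ⨯₃ P f)) = 0`
determines `x` uniquely (among points distinct from `a`). -/
lemma pascal_aux (L : Fin 3 → ℂ) (a b f e e' : ℂ) (hae : e ≠ a) (hae' : e' ≠ a)
    (hfb : f ≠ b) (hfa : f ≠ a) (hb : L ⬝ᵥ P b ≠ 0)
    (h1 : L ⬝ᵥ ((P a ⨯₃ P e) ⨯₃ (P b ⨯₃ P f)) = 0)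
    (h1' : L ⬝ᵥ ((P a ⨯₃ P e') ⨯₃ (P b ⨯₃ P f)) = 0) : e = e' := by
  have hb' : L 0 + L 1 * b + L 2 * b ^ 2 ≠ 0 := by
    intro h; apply hb
    simp [P, dotProduct, Fin.sum_univ_three]
    linear_combination h
  set c := -L 0 - L 1 * a + L 2 * (b*f - a*b - a*f) with hc
  set t := L 0 * (b + f - a) + L 1 * (b*f) + L 2 * (a*b*f) with ht
  have expand : ∀ x : ℂ, L ⬝ᵥ ((P a ⨯₃ P x) ⨯₃ (P b ⨯₃ P f)) = (x - a) * ((f - b) * (c * x + t)) := by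
    intro x
    simp [P, cross_apply, dotProduct, Fin.sum_univ_three, hc, ht]
    ring
  rw [expand] at h1 h1'
  have Te : c * e + t = 0 := by
    rcases mul_eq_zero.1 h1 with h | h
    · exact absurd (sub_eq_zero.1 h) hae
    rcases mul_eq_zero.1 h with h | h
    · exact absurd (sub_eq_zero.1 h) hfb
    · exact h
  have Te' : c * e' + t = 0 := by
    rcases mul_eq_zero.1 h1' with h | h
    · exact absurd (sub_eq_zero.1 h) hae'
    rcases mul_eq_zero.1 h with h | h
    · exact absurd (sub_eq_zero.1 h) hfb
    · exact h
  have hcne : c ≠ 0 := by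
    intro h0
    apply hb'
    have key : (f - a) * (L 0 + L 1 * b + L 2 * b ^ 2) = 0 := by
      linear_combination (b - e) * h0 + Te
    rcases mul_eq_zero.1 key with h | h
    · exact absurd (sub_eq_zero.1 h) hfa
    · exact h
  have hee : c * (e - e') = 0 := by linear_combination Te - Te'
  rcases mul_eq_zero.1 hee with h | h
  · exact absurd h hcne
  · exact sub_eq_zero.1 h

/-- Uniqueness in the parametrization of the Pascal variety: a hexad in
`Π(s, ℓ)` for the standard symbol `s = [A B C; F E D]` is uniquely determined
by the four points `A, B, C, F`. -/
theorem pascal_variety_uniqueness (a b c f : ℂ) (L : Fin 3 → ℂ)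
    (habcf : List.Pairwise (· ≠ ·) [a, b, c, f])
    (ha : L ⬝ᵥ P a ≠ 0) (hb : L ⬝ᵥ P b ≠ 0) (hc : L ⬝ᵥ P c ≠ 0)
    (hf : L ⬝ᵥ P f ≠ 0)
    (d e d' e' : ℂ)
    (hdist : List.Pairwise (· ≠ ·) [a, b, c, d, e, f])
    (hdist' : List.Pairwise (· ≠ ·) [a, b, c, d', e', f])
    (h1 : L ⬝ᵥ ((P a ⨯₃ P e) ⨯₃ (P b ⨯₃ P f)) = 0)
    (h2 : L ⬝ᵥ ((P b ⨯₃ P d) ⨯₃ (P c ⨯₃ P e)) = 0)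
    (h3 : L ⬝ᵥ ((P a ⨯₃ P d) ⨯₃ (P c ⨯₃ P f)) = 0)
    (h1' : L ⬝ᵥ ((P a ⨯₃ P e') ⨯₃ (P b ⨯₃ P f)) = 0)
    (h2' : L ⬝ᵥ ((P b ⨯₃ P d') ⨯₃ (P c ⨯₃ P e')) = 0)
    (h3' : L ⬝ᵥ ((P a ⨯₃ P d') ⨯₃ (P c ⨯₃ P f)) = 0) :
    d = d' ∧ e = e' := by
  simp only [List.pairwise_cons, List.mem_cons, List.mem_singleton, List.not_mem_nil,
    forall_eq_or_imp, forall_eq, and_true, false_implies, implies_true] at hdist hdist'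
  obtain ⟨⟨hab, hac, had, hae, haf⟩, ⟨hbc, hbd, hbe, hbf⟩, ⟨hcd, hce, hcf⟩, ⟨hde, hdf⟩, hef, -⟩ := hdist
  obtain ⟨⟨-, -, had', hae', -⟩, ⟨-, hbd', hbe', -⟩, ⟨hcd', hce', -⟩, ⟨hde', hdf'⟩, hef', -⟩ := hdist'
  constructor
  · exact pascal_aux L a c f d d' (Ne.symm had) (Ne.symm had') (Ne.symm hcf) (Ne.symm haf) hc h3 h3'
  · exact pascal_aux L a b f e e' (Ne.symm hae) (Ne.symm hae') (Ne.symm hbf) (Ne.symm haf) hb h1 h1'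
end

section
/- Let φ be an automorphism of S₆ = Equiv.Perm (Fin 6) that is not inner. Then φ maps every transposition to a product of three disjoint transpositions: for every τ ∈ Equiv.Perm (Fin 6) with cycle type {2}, the permutation φ(τ) has cycle type {2, 2, 2}. Consequently φ restricts to a bijection between the 15 transpositions and the 15 elements of cycle type 2+2+2. -/
/-!
The image of a transposition under `φ` is an involution, so its cycle type is `2`, `2 + 2` or
`2 + 2 + 2`. Automorphisms permute conjugacy classes, so the image class has the 15 elements of
the class of transpositions, which excludes `2 + 2` (45 elements).

Transpositions cannot go to transpositions either, because then `φ` would be inner: the images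
of the transpositions `(o y)` pairwise do not commute, so their supports pairwise meet; a
transposition meeting two sides of a triangle through their common vertex either passes through
that vertex or is the third side, so all images move one point `c`, and the permutation
`o ↦ c`, `y ↦ φ (o y) c` conjugates like `φ` on the generators `(o y)`.
-/

open Equiv Equiv.Perm Finset

namespace Equiv.Perm

variable {α : Type*}

lemma exists_apply_ne_of_not_commute {σ τ : Perm α} (h : ¬Commute σ τ) :
    ∃ c, σ c ≠ c ∧ τ c ≠ c := by
  by_contra! h'
  exact h (Disjoint.commute fun x => or_iff_not_imp_left.mpr (h' x))

variable [DecidableEq α]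

lemma IsSwap.eq_swap_apply {σ : Perm α} (hσ : σ.IsSwap) {c : α} (hc : σ c ≠ c) :
    σ = swap c (σ c) := by
  obtain ⟨x, y, -, rfl⟩ := hσ
  by_cases hx : c = x
  · rw [hx, swap_apply_left]
  by_cases hy : c = y
  · rw [hy, swap_apply_right, swap_comm]
  · exact absurd (swap_apply_of_ne_of_ne hx hy) hc

lemma commute_swap_swap {x y z t : α} (hzx : z ≠ x) (hzy : z ≠ y) (htx : t ≠ x) (hty : t ≠ y) :
    Commute (swap x y) (swap z t) := by
  rcases eq_or_ne x y with rfl | hxy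
  · exact swap_self x ▸ Commute.one_left _
  rcases eq_or_ne z t with rfl | hzt
  · exact swap_self z ▸ Commute.one_right _
  exact (disjoint_swap_swap (by simp_all [eq_comm])).commute

lemma not_commute_swap_swap {o a b : α} (hoa : o ≠ a) (hob : o ≠ b) (hab : a ≠ b) :
    ¬Commute (swap o a) (swap o b) := by
  intro h
  have := congrArg (· o) h.eq
  simp [swap_apply_of_ne_of_ne hoa.symm hab, swap_apply_of_ne_of_ne hob.symm hab.symm] at this
  exact hab this.symm

/-- If `σ` avoided `c`, the supports of `σ₁`, `σ₂`, `σ` would be the sides of a triangle, whose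
third side is the support of `σ₁ σ₂ σ₁`. -/
lemma IsSwap.apply_ne_of_not_commute {σ₁ σ₂ σ : Perm α} (h₁ : σ₁.IsSwap) (h₂ : σ₂.IsSwap)
    (hσ : σ.IsSwap) {c : α} (hc₁ : σ₁ c ≠ c) (hc₂ : σ₂ c ≠ c) (h₁₂ : σ₁ ≠ σ₂)
    (hσ₁ : ¬Commute σ σ₁) (hσ₂ : ¬Commute σ σ₂) (hne : σ ≠ σ₁ * σ₂ * σ₁) : σ c ≠ c := by
  obtain ⟨a, hca, rfl⟩ : ∃ a, c ≠ a ∧ σ₁ = swap c a := ⟨_, hc₁.symm, h₁.eq_swap_apply hc₁⟩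
  obtain ⟨b, hcb, rfl⟩ : ∃ b, c ≠ b ∧ σ₂ = swap c b := ⟨_, hc₂.symm, h₂.eq_swap_apply hc₂⟩
  obtain ⟨x, y, hxy, rfl⟩ := hσ
  have hab : a ≠ b := fun h => h₁₂ (h ▸ rfl)
  rw [swap_comm c b, swap_mul_swap_mul_swap hcb.symm hab.symm] at hne
  intro hc
  have hcx : c ≠ x := fun h => hxy (by simp_all)
  have hcy : c ≠ y := fun h => hxy (by simp_all)
  have mem_of_not_commute : ∀ d, ¬Commute (swap x y) (swap c d) → d = x ∨ d = y := by
    intro d h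
    by_contra! hd
    exact h (commute_swap_swap hcx hcy hd.1 hd.2)
  rcases mem_of_not_commute a hσ₁ with rfl | rfl <;>
    rcases mem_of_not_commute b hσ₂ with rfl | rfl
  all_goals first | exact hab rfl | exact hne rfl | exact hne (swap_comm _ _)

variable [Fintype α]

lemma exists_conj_of_map_swap_apply_ne (φ : MulAut (Perm α)) {o c : α}
    (hswap : ∀ y ≠ o, (φ (swap o y)).IsSwap) (hc : ∀ y ≠ o, φ (swap o y) c ≠ c) :
    ∃ g : Perm α, ∀ x, φ x = g * x * g⁻¹ := by
  set f : α → α := fun y => if y = o then c else φ (swap o y) c with hf_def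
  have hf : ∀ y ≠ o, φ (swap o y) = swap (f o) (f y) := fun y hy => by
    simpa [hf_def, hy] using (hswap y hy).eq_swap_apply (hc y hy)
  have hf_inj : Function.Injective f := by
    have hfo : ∀ y ≠ o, f y ≠ f o := fun y hy => by simpa [hf_def, hy] using hc y hy
    intro y z h
    rcases eq_or_ne y o with rfl | hy
    · by_contra hz; exact hfo z (Ne.symm hz) h.symm
    rcases eq_or_ne z o with rfl | hz
    · exact absurd h (hfo y hy)
    have := congrArg (· o) (φ.injective ((hf y hy).trans (h ▸ (hf z hz).symm)))
    simpa using this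
  let g : Perm α := Equiv.ofBijective f (Finite.injective_iff_bijective.mp hf_inj)
  have hg : ∀ y ≠ o, φ (swap o y) = g * swap o y * g⁻¹ := fun y hy => by
    rw [← swap_apply_apply]; exact hf y hy
  have hφg : φ.toMonoidHom = (MulAut.conj g).toMonoidHom := by
    refine MonoidHom.eq_of_eqOn_dense closure_isSwap ?_
    rintro _ ⟨x, y, hxy, rfl⟩
    rcases eq_or_ne x o with rfl | hx
    · exact hg y hxy.symm
    rcases eq_or_ne y o with rfl | hy
    · rw [swap_comm]; exact hg x hx
    have hdecomp := swap_mul_swap_mul_swap hy hxy.symm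
    rw [swap_comm y o] at hdecomp
    simp only [MulEquiv.coe_toMonoidHom, MulAut.conj_apply, ← hdecomp, map_mul, hg x hx, hg y hy]
  exact ⟨g, fun x => DFunLike.congr_fun hφg x⟩

theorem exists_conj_of_map_isSwap (hα : 2 < Fintype.card α) (φ : MulAut (Perm α))
    (hφ : ∀ σ : Perm α, σ.IsSwap → (φ σ).IsSwap) :
    ∃ g : Perm α, ∀ x, φ x = g * x * g⁻¹ := by
  obtain ⟨o, a, b, hoa, hob, hab⟩ := Fintype.two_lt_card_iff.mp hα
  have hswap : ∀ y ≠ o, (φ (swap o y)).IsSwap := fun y hy => hφ _ ⟨o, y, hy.symm, rfl⟩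
  have hnc : ∀ y z, y ≠ o → z ≠ o → y ≠ z → ¬Commute (φ (swap o y)) (φ (swap o z)) :=
    fun y z hy hz hyz h => not_commute_swap_swap hy.symm hz.symm hyz (by simpa using h.map φ.symm)
  obtain ⟨c, hca, hcb⟩ := exists_apply_ne_of_not_commute (hnc a b hoa.symm hob.symm hab)
  refine exists_conj_of_map_swap_apply_ne φ (c := c) hswap fun y hy => ?_
  rcases eq_or_ne y a with rfl | hya
  · exact hca
  rcases eq_or_ne y b with rfl | hyb
  · exact hcb
  refine IsSwap.apply_ne_of_not_commute (hswap a hoa.symm) (hswap b hob.symm) (hswap y hy) hca hcb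
    (fun h => hnc a b hoa.symm hob.symm hab (h ▸ Commute.refl _))
    (hnc y a hy hoa.symm hya) (hnc y b hy hob.symm hyb) ?_
  rw [← map_mul, ← map_mul, swap_comm o b, swap_mul_swap_mul_swap hob.symm hab.symm]
  refine φ.injective.ne fun h => hy ?_
  simpa [swap_apply_of_ne_of_ne hoa hob] using congrArg (· o) h

lemma cycleType_map_eq (φ : MulAut (Perm α)) {σ τ : Perm α} (h : σ.cycleType = τ.cycleType) :
    (φ σ).cycleType = (φ τ).cycleType := by
  rw [← isConj_iff_cycleType_eq] at h ⊢
  exact φ.toMonoidHom.map_isConj h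

lemma image_setOf_cycleType_eq (φ : MulAut (Perm α)) (τ : Perm α) :
    φ '' {σ | σ.cycleType = τ.cycleType} = {σ | σ.cycleType = (φ τ).cycleType} := by
  ext σ
  refine ⟨?_, fun hσ => ⟨φ.symm σ, ?_, φ.apply_symm_apply σ⟩⟩
  · rintro ⟨ρ, hρ, rfl⟩
    exact cycleType_map_eq φ hρ
  · simpa using cycleType_map_eq φ.symm hσ

lemma card_filter_cycleType_map_eq (φ : MulAut (Perm α)) (τ : Perm α) :
    #({σ | σ.cycleType = (φ τ).cycleType} : Finset (Perm α)) =
      #({σ | σ.cycleType = τ.cycleType} : Finset (Perm α)) := by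
  simp_rw [← Set.ncard_coe_finset, coe_filter_univ, ← image_setOf_cycleType_eq φ τ,
    Set.ncard_image_of_injective _ φ.injective]

lemma IsSwap.map_of_map {σ τ : Perm α} (φ : MulAut (Perm α)) (hσ : σ.IsSwap) (hτ : τ.IsSwap)
    (hφτ : (φ τ).IsSwap) : (φ σ).IsSwap := by
  rw [isSwap_iff_cycleType] at hσ hτ hφτ ⊢
  rwa [cycleType_map_eq φ (hσ.trans hτ.symm)]

end Equiv.Perm

lemma cycleType_map_swap_of_not_inner (φ : MulAut (Perm (Fin 6)))
    (hφ : ¬∃ g : Perm (Fin 6), ∀ x, φ x = g * x * g⁻¹) :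
    (φ (swap 0 1)).cycleType = {2, 2, 2} := by
  have hτ : (swap (0 : Fin 6) 1).IsSwap := ⟨0, 1, by decide, rfl⟩
  obtain ⟨k, hk⟩ := cycleType_prime_order (σ := φ (swap 0 1))
    (by rw [MulEquiv.orderOf_eq, hτ.orderOf]; exact Nat.prime_two)
  rw [MulEquiv.orderOf_eq, hτ.orderOf] at hk
  have hk2 : k ≤ 2 := by
    have := sum_cycleType_le (φ (swap 0 1))
    rw [hk, Multiset.sum_replicate, Fintype.card_fin, smul_eq_mul] at this
    omega
  have hcard := card_filter_cycleType_map_eq φ (swap 0 1)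
  rw [isSwap_iff_cycleType.mp hτ, card_of_cycleType, card_of_cycleType] at hcard
  interval_cases k
  · have hφτ : (φ (swap 0 1)).IsSwap := isSwap_iff_cycleType.mpr hk
    exact absurd (exists_conj_of_map_isSwap (by decide) φ fun σ hσ => hσ.map_of_map φ hτ hφτ) hφ
  · rw [hk] at hcard
    exact absurd hcard (by decide)
  · exact hk

/-- A non-inner automorphism of `S₆` sends every transposition to a product of
three disjoint transpositions, and hence restricts to a bijection between the
15 transpositions and the 15 elements of cycle type `2 + 2 + 2`. -/
theorem nonInner_aut_transposition_image
    (φ : MulAut (Equiv.Perm (Fin 6)))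
    (hφ : ¬ ∃ g : Equiv.Perm (Fin 6), ∀ x : Equiv.Perm (Fin 6),
      φ x = g * x * g⁻¹) :
    (∀ τ : Equiv.Perm (Fin 6), τ.cycleType = {2} →
      (φ τ).cycleType = {2, 2, 2}) ∧
    Set.BijOn (⇑φ) {τ : Equiv.Perm (Fin 6) | τ.cycleType = {2}}
      {σ : Equiv.Perm (Fin 6) | σ.cycleType = {2, 2, 2}} := by
  have himage := image_setOf_cycleType_eq φ (swap 0 1)
  rw [cycleType_map_swap_of_not_inner φ hφ, isSwap_iff_cycleType.mp ⟨0, 1, by decide, rfl⟩]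
    at himage
  have hbij := himage ▸ φ.injective.injOn.bijOn_image
  exact ⟨fun τ hτ => hbij.mapsTo hτ, hbij⟩
end
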